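/- Let α : V × V → W be symmetric with curvature nullity Γ and relative nullity Δ_α, β = α|_{V × Γ}. Suppose dim S(β) = dim Γ − dim Δ_α. Then Δ_β + Γ = V and S(β) = S(α|_{Γ × Γ}), i.e., the span of α restricted to Γ × Γ already equals the span of β. -/

import Mathlib

/-!
Restricting `α` to `V × Γ` gives a flat bilinear form `β`, by the pair symmetry of the Gauss
tensor. Let `Z₀ ∈ Γ` be right regular, i.e. maximise the rank of `β(·, Z₀)`. As the rank of
`β(·, Z₀ + tZ)` never exceeds that of `β(·, Z₀)` and rank is lower semicontinuous, `β(·, Z)`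
maps `ker β(·, Z₀)` into the image of `β(·, Z₀)`, and flatness then forces `ker β(·, Z₀) ⊆ Δ_β` (Moore's lemma). Hence
`dim V ≤ dim Δ_β + dim S(β) = dim Δ_β + dim Γ - dim Δ_α = dim (Δ_β + Γ)`, because
`Δ_β ∩ Γ = Δ_α`. So `Δ_β + Γ = V`, and writing `X = D + G` with `D ∈ Δ_β`, `G ∈ Γ` gives
`α(X, Z) = α(G, Z)` for `Z ∈ Γ`.
-/

open Module LinearMap RealInnerProductSpace Filter Topology

section Pencil

variable {𝕜 V W : Type*} [NontriviallyNormedField 𝕜] [CompleteSpace 𝕜]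
  [AddCommGroup V] [Module 𝕜 V] [NormedAddCommGroup W] [NormedSpace 𝕜 W] [FiniteDimensional 𝕜 W]

theorem LinearMap.apply_mem_range_of_forall_finrank_range_add_smul_le {A B : V →ₗ[𝕜] W}
    (h : ∀ t : 𝕜, finrank 𝕜 (range (A + t • B)) ≤ finrank 𝕜 (range A))
    {x : V} (hx : A x = 0) : B x ∈ range A := by
  by_contra hBx
  set r := finrank 𝕜 (range A)
  let b := finBasis 𝕜 (range A)
  choose u hu using fun i => mem_range.mp (b i).2
  -- For `t ≠ 0` the range of `A + t • B` contains `t⁻¹ • (A + t • B) x = B x`.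
  let F : 𝕜 → Fin (r + 1) → W := fun t => Fin.cons (B x) fun i => (A + t • B) (u i)
  have hF0 : LinearIndependent 𝕜 (F 0) := by
    refine linearIndependent_finCons.mpr ⟨?_, fun hmem => hBx ?_⟩
    · simpa [F, hu, Function.comp_def] using b.linearIndependent.map' _ (range A).ker_subtype
    · refine Submodule.span_le.mpr ?_ hmem
      rintro _ ⟨i, rfl⟩
      simp [hu]
  have hFcont : Continuous F := by
    refine continuous_pi fun j => Fin.cases (by simp [F]; fun_prop) (fun i => ?_) j
    simp [F]
    fun_prop
  have hev : ∀ᶠ t in 𝓝[≠] (0 : 𝕜), LinearIndependent 𝕜 (F t) ∧ t ≠ 0 :=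
    (((hFcont.tendsto 0).eventually hF0.eventually).filter_mono nhdsWithin_le_nhds).and
      self_mem_nhdsWithin
  obtain ⟨t, htF, ht0⟩ := hev.exists
  have hle : Submodule.span 𝕜 (Set.range (F t)) ≤ range (A + t • B) := by
    rw [Submodule.span_le]
    rintro _ ⟨j, rfl⟩
    refine Fin.cases ⟨t⁻¹ • x, ?_⟩ (fun i => ⟨u i, rfl⟩) j
    simp [F, hx, smul_smul, inv_mul_cancel₀ ht0]
  have hrank : r + 1 ≤ finrank 𝕜 (range (A + t • B)) := by
    simpa using (finrank_span_eq_card htF).symm.trans_le (Submodule.finrank_mono hle)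
  exact absurd (h t) (by omega)

end Pencil

theorem exists_forall_finrank_range_le {K V W ι : Type*} [DivisionRing K] [AddCommGroup V]
    [Module K V] [AddCommGroup W] [Module K W] [FiniteDimensional K W] [Nonempty ι]
    (f : ι → V →ₗ[K] W) : ∃ i₀, ∀ i, finrank K (range (f i)) ≤ finrank K (range (f i₀)) := by
  have hbdd : BddAbove (Set.range fun i => finrank K (range (f i))) :=
    ⟨finrank K W, by rintro _ ⟨i, rfl⟩; exact Submodule.finrank_le _⟩
  obtain ⟨_, ⟨i₀, rfl⟩, hi₀⟩ := hbdd.exists_isGreatest_of_nonempty (Set.range_nonempty _)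
  exact ⟨i₀, fun i => hi₀ ⟨i, rfl⟩⟩

namespace LinearMap

section Flat

variable {U V W : Type*} [AddCommGroup U] [Module ℝ U] [AddCommGroup V] [Module ℝ V]
  [NormedAddCommGroup W] [InnerProductSpace ℝ W]

def IsFlat (β : V →ₗ[ℝ] U →ₗ[ℝ] W) : Prop :=
  ∀ X Y Z T, ⟪β X Z, β Y T⟫ = ⟪β X T, β Y Z⟫

variable {β : V →ₗ[ℝ] U →ₗ[ℝ] W}

/-- Moore's lemma, for a right regular `Z₀`. -/
theorem IsFlat.ker_flip_le_ker [FiniteDimensional ℝ W] (hβ : β.IsFlat) {Z₀ : U}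
    (hZ₀ : ∀ Z, finrank ℝ (range (β.flip Z)) ≤ finrank ℝ (range (β.flip Z₀))) :
    ker (β.flip Z₀) ≤ ker β := by
  intro X hX
  rw [LinearMap.mem_ker, flip_apply] at hX
  refine LinearMap.mem_ker.mpr (ext fun Z => ?_)
  have hpencil : ∀ t : ℝ, β.flip Z₀ + t • β.flip Z = β.flip (Z₀ + t • Z) := fun t => by
    rw [map_add, map_smul]
  obtain ⟨Y, hY⟩ := (β.flip Z₀).apply_mem_range_of_forall_finrank_range_add_smul_le
    (fun t => hpencil t ▸ hZ₀ _) (x := X) hX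
  rw [flip_apply, flip_apply] at hY
  have : ⟪β X Z, β X Z⟫ = 0 := by
    nth_rw 2 [← hY]
    rw [hβ X Y Z Z₀, hX, inner_zero_left]
  simpa using inner_self_eq_zero.mp this

theorem IsFlat.finrank_le_finrank_ker_add [FiniteDimensional ℝ V] [FiniteDimensional ℝ W]
    (hβ : β.IsFlat) {S : Submodule ℝ W} (hS : ∀ X Z, β X Z ∈ S) :
    finrank ℝ V ≤ finrank ℝ (ker β) + finrank ℝ S := by
  obtain ⟨Z₀, hZ₀⟩ := exists_forall_finrank_range_le β.flip
  have hrange : range (β.flip Z₀) ≤ S := by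
    rintro _ ⟨X, rfl⟩
    exact hS X Z₀
  calc finrank ℝ V = finrank ℝ (range (β.flip Z₀)) + finrank ℝ (ker (β.flip Z₀)) :=
        (finrank_range_add_finrank_ker _).symm
    _ ≤ finrank ℝ S + finrank ℝ (ker β) :=
        add_le_add (Submodule.finrank_mono hrange) (Submodule.finrank_mono (hβ.ker_flip_le_ker hZ₀))
    _ = _ := add_comm _ _

end Flat

section Gauss

variable {V W : Type*} [AddCommGroup V] [Module ℝ V] [NormedAddCommGroup W] [InnerProductSpace ℝ W]
  {α : V →ₗ[ℝ] V →ₗ[ℝ] W}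

def IsCurvatureNull (α : V →ₗ[ℝ] V →ₗ[ℝ] W) (X : V) : Prop :=
  ∀ Y Z T, ⟪α X T, α Y Z⟫ - ⟪α X Z, α Y T⟫ = 0

-- The pair symmetry `R(X, Y, Z, T) = R(Z, T, X, Y)` of the Gauss tensor moves `Z` to the first slot.
theorem IsCurvatureNull.inner_apply_comm (hsymm : ∀ X Y, α X Y = α Y X) {Z : V}
    (hZ : α.IsCurvatureNull Z) (X Y T : V) : ⟪α X Z, α Y T⟫ = ⟪α X T, α Y Z⟫ := by
  have h := sub_eq_zero.mp (hZ T X Y)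
  rw [hsymm X Z, hsymm Y Z, hsymm Y T, ← h, hsymm X T, real_inner_comm]

theorem isFlat_compl₂_subtype (hsymm : ∀ X Y, α X Y = α Y X) {Γ : Submodule ℝ V}
    (hΓ : ∀ Z ∈ Γ, α.IsCurvatureNull Z) : (α.compl₂ Γ.subtype).IsFlat :=
  fun X Y Z T => (hΓ Z Z.2).inner_apply_comm hsymm X Y T

theorem IsCurvatureNull.eq_zero_of_apply_self (hsymm : ∀ X Y, α X Y = α Y X) {Z : V}
    (hZ : α.IsCurvatureNull Z) (hZZ : α Z Z = 0) : α Z = 0 := by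
  ext X
  have : ⟪α Z X, α X Z⟫ = 0 := by
    rw [← hZ.inner_apply_comm hsymm, hZZ, inner_zero_left]
  rw [hsymm X Z] at this
  exact inner_self_eq_zero.mp this

end Gauss

theorem setOf_apply_eq_of_sup_eq_top {R V W : Type*} [CommSemiring R] [AddCommMonoid V]
    [Module R V] [AddCommMonoid W] [Module R W] {α : V →ₗ[R] V →ₗ[R] W} {Δ Γ : Submodule R V}
    (hsup : Δ ⊔ Γ = ⊤) (hΔ : ∀ X ∈ Δ, ∀ Z ∈ Γ, α X Z = 0) :
    {w | ∃ X : V, ∃ Z ∈ Γ, w = α X Z} = {w | ∃ X ∈ Γ, ∃ Z ∈ Γ, w = α X Z} := by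
  refine Set.Subset.antisymm ?_ fun w ⟨X, _, hw⟩ => ⟨X, hw⟩
  rintro _ ⟨X, Z, hZ, rfl⟩
  obtain ⟨D, hD, G, hG, rfl⟩ := Submodule.mem_sup.mp (hsup ▸ Submodule.mem_top : X ∈ Δ ⊔ Γ)
  exact ⟨G, hG, Z, hZ, by rw [map_add, add_apply, hΔ D hD Z hZ, zero_add]⟩

end LinearMap

/-- If `dim S(β) = μ - ν`, then `Δ_β + Γ = V` and `S(β) = S(α|_{Γ × Γ})`. -/
theorem minimal_span_structure
    {V W : Type*} [AddCommGroup V] [Module ℝ V] [FiniteDimensional ℝ V]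
    [NormedAddCommGroup W] [InnerProductSpace ℝ W] [FiniteDimensional ℝ W]
    (α : V →ₗ[ℝ] V →ₗ[ℝ] W)
    (hsymm : ∀ X Y : V, α X Y = α Y X)
    (Γ : Submodule ℝ V)
    (hΓ : ∀ X : V, X ∈ Γ ↔
      ∀ Y Z T : V, ⟪α X T, α Y Z⟫ - ⟪α X Z, α Y T⟫ = 0)
    (Δβ : Submodule ℝ V)
    (hΔβ : ∀ X : V, X ∈ Δβ ↔ ∀ Z ∈ Γ, α X Z = 0)
    (hdim : finrank ℝ (Submodule.span ℝ {w : W | ∃ X : V, ∃ Z ∈ Γ, w = α X Z}) =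
      finrank ℝ Γ - finrank ℝ (ker α)) :
    Δβ ⊔ Γ = ⊤ ∧
      Submodule.span ℝ {w : W | ∃ X : V, ∃ Z ∈ Γ, w = α X Z} =
        Submodule.span ℝ {w : W | ∃ X ∈ Γ, ∃ Z ∈ Γ, w = α X Z} := by
  have hkerβ : ker (α.compl₂ Γ.subtype) = Δβ := by
    ext X
    simp [hΔβ, LinearMap.ext_iff]
  have hkerΓ : ker α ≤ Γ := fun X hX => (hΓ X).mpr fun Y Z T => by simp [mem_ker.mp hX]
  have hinf : Δβ ⊓ Γ = ker α := by
    refine le_antisymm ?_ fun X hX =>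
      ⟨(hΔβ X).mpr fun Z _ => by simp [mem_ker.mp hX], hkerΓ hX⟩
    rintro Z ⟨hZΔ, hZΓ⟩
    exact mem_ker.mpr <|
      IsCurvatureNull.eq_zero_of_apply_self hsymm ((hΓ Z).mp hZΓ) ((hΔβ Z).mp hZΔ Z hZΓ)
  have hcount := (isFlat_compl₂_subtype hsymm fun Z hZ => (hΓ Z).mp hZ).finrank_le_finrank_ker_add
    (S := Submodule.span ℝ {w : W | ∃ X : V, ∃ Z ∈ Γ, w = α X Z})
    fun X Z => Submodule.subset_span ⟨X, Z, Z.2, rfl⟩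
  rw [hkerβ] at hcount
  have hmod := Submodule.finrank_sup_add_finrank_inf_eq Δβ Γ
  rw [hinf] at hmod
  have hsup : Δβ ⊔ Γ = ⊤ := Submodule.eq_top_of_finrank_eq <|
    le_antisymm (Submodule.finrank_le _) (by have := Submodule.finrank_mono hkerΓ; omega)
  exact ⟨hsup, congrArg _ (setOf_apply_eq_of_sup_eq_top hsup fun X hX => (hΔβ X).mp hX)⟩
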